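/- Let K, L be convex bodies in ℝ³ containing the origin in their interiors, with relative quermassintegrals W₀, W₁, W₂, W₃ of K with respect to L. Let μ be the surface area measure of K. If K is in the class ℜ₂ with respect to L, then ∫_{S²} h_K(u)²/h_L(u) dμ(u) ≤ (6 V(K) W₂ − 3 W₁²) / V(L). -/
import Mathlib

open scoped Pointwise RealInnerProductSpace
open MeasureTheory Metric

set_option maxHeartbeats 1000000

noncomputable section

/-- The support function `h_K(u) = sup_{x ∈ K} ⟨x, u⟩` of a set `K ⊆ ℝ³`. -/
def supp (K : Set (EuclideanSpace ℝ (Fin 3))) (u : EuclideanSpace ℝ (Fin 3)) : ℝ :=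
  sSup ((fun x => ⟪x, u⟫) '' K)

/-- `r_o(K,L) = min_{u ∈ S²} h_K(u)/h_L(u)`. -/
def rIn (K L : Set (EuclideanSpace ℝ (Fin 3))) : ℝ :=
  sInf ((fun u => supp K u / supp L u) '' sphere (0 : EuclideanSpace ℝ (Fin 3)) 1)

/-- `R_o(K,L) = max_{u ∈ S²} h_K(u)/h_L(u)`. -/
def rOut (K L : Set (EuclideanSpace ℝ (Fin 3))) : ℝ :=
  sSup ((fun u => supp K u / supp L u) '' sphere (0 : EuclideanSpace ℝ (Fin 3)) 1)

namespace SuppAux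

local notation "E3" => EuclideanSpace ℝ (Fin 3)

variable {K : Set (EuclideanSpace ℝ (Fin 3))} {u v : EuclideanSpace ℝ (Fin 3)} {a R : ℝ}

lemma supp_bddAbove (hK : IsCompact K) (u : E3) :
    BddAbove ((fun x => ⟪x, u⟫) '' K) :=
  (hK.image (continuous_id.inner continuous_const)).bddAbove

lemma le_supp (hK : IsCompact K) {x : E3} (hxK : x ∈ K) :
    ⟪x, u⟫ ≤ supp K u :=
  le_csSup (supp_bddAbove hK u) ⟨x, hxK, rfl⟩

lemma supp_nonneg (hK : IsCompact K) (h0 : (0:E3) ∈ K) (u : E3) : 0 ≤ supp K u := by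
  have := le_supp hK h0 (u := u)
  simpa using this

lemma supp_le (hne : K.Nonempty) (h : ∀ x ∈ K, ⟪x, u⟫ ≤ a) : supp K u ≤ a :=
  csSup_le (hne.image _) (by rintro y ⟨x, hx, rfl⟩; exact h x hx)

lemma supp_ge_of_ball (hK : IsCompact K) (ha : 0 < a) (hsub : closedBall (0:E3) a ⊆ K)
    (hu : ‖u‖ = 1) : a ≤ supp K u := by
  have hmem : a • u ∈ K := hsub (by
    simp [mem_closedBall_zero_iff, norm_smul, hu, abs_of_pos ha, le_refl])
  have := le_supp hK hmem (u := u)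
  rwa [real_inner_smul_left, real_inner_self_eq_norm_sq, hu, one_pow, mul_one] at this

lemma supp_le_of_subset_ball (hne : K.Nonempty) (hsub : K ⊆ closedBall (0:E3) R) :
    supp K u ≤ R * ‖u‖ := by
  refine supp_le hne (fun x hx => ?_)
  calc ⟪x, u⟫ ≤ ‖x‖ * ‖u‖ := real_inner_le_norm x u
    _ ≤ R * ‖u‖ := by
        have := mem_closedBall_zero_iff.1 (hsub hx)
        exact mul_le_mul_of_nonneg_right this (norm_nonneg u)

lemma supp_lipschitz (hK : IsCompact K) (hne : K.Nonempty)
    (hsub : K ⊆ closedBall (0:E3) R) (u v : E3) :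
    supp K u - supp K v ≤ R * ‖u - v‖ := by
  have h1 : supp K u ≤ supp K v + R * ‖u - v‖ := by
    refine supp_le hne (fun x hx => ?_)
    have h2 : ⟪x, u⟫ = ⟪x, v⟫ + ⟪x, u - v⟫ := by rw [← inner_add_right, add_sub_cancel]
    have h3 : ⟪x, v⟫ ≤ supp K v := le_supp hK hx
    have h4 : ⟪x, u - v⟫ ≤ R * ‖u - v‖ := by
      calc ⟪x, u - v⟫ ≤ ‖x‖ * ‖u - v‖ := real_inner_le_norm _ _
        _ ≤ R * ‖u - v‖ := mul_le_mul_of_nonneg_right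
            (mem_closedBall_zero_iff.1 (hsub hx)) (norm_nonneg _)
    linarith [h2 ▸ add_le_add h3 h4]
  linarith

lemma supp_continuous (hK : IsCompact K) (hne : K.Nonempty) :
    Continuous (supp K) := by
  obtain ⟨R, hR0, hsub⟩ := hK.isBounded.subset_closedBall_lt 0 0
  have : LipschitzWith (Real.toNNReal R) (supp K) := by
    refine LipschitzWith.of_dist_le_mul (fun u v => ?_)
    rw [Real.dist_eq, abs_sub_le_iff]
    constructor
    · simpa [Real.coe_toNNReal R hR0.le, dist_eq_norm] using
        supp_lipschitz hK hne hsub u v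
    · simpa [Real.coe_toNNReal R hR0.le, dist_eq_norm, norm_sub_rev] using
        supp_lipschitz hK hne hsub v u
  exact this.continuous

lemma vol_smul (t : ℝ) (ht : 0 ≤ t) (s : Set E3) :
    (volume (t • s)).toReal = t ^ 3 * (volume s).toReal := by
  rw [Measure.addHaar_smul_of_nonneg _ ht,
    show Module.finrank ℝ (EuclideanSpace ℝ (Fin 3)) = 3 from finrank_euclideanSpace_fin,
    ENNReal.toReal_mul, ENNReal.toReal_ofReal (by positivity)]

lemma smul_cball (t ε : ℝ) (ht : 0 < t) (hε : 0 ≤ ε) :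
    t • closedBall (0:E3) ε = closedBall 0 (t * ε) := by
  rw [smul_closedBall _ _ hε]; simp [abs_of_pos ht]

lemma integrable_of_cont (μ : Measure (sphere (0 : E3) 1)) [IsFiniteMeasure μ]
    (f : sphere (0 : E3) 1 → ℝ) (hf : Continuous f) : Integrable f μ := by
  obtain ⟨C, hC⟩ := (isCompact_range hf).isBounded.exists_norm_le
  exact ⟨hf.aestronglyMeasurable,
    HasFiniteIntegral.of_bounded (C := C)
      (Filter.Eventually.of_forall fun x => hC _ (Set.mem_range_self x))⟩

end SuppAux

open SuppAux

/-- If `K` is in the class `ℜ₂` with respect to `L`, then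
`∫_{S²} h_K²/h_L dS_K ≤ (6 V(K) W₂ − 3 W₁²) / V(L)`, where `S_K` is the surface area
measure of `K`. -/
theorem integral_bound_of_class_R2
    (K L : Set (EuclideanSpace ℝ (Fin 3)))
    (hKc : IsCompact K) (hKconv : Convex ℝ K) (hKint : (interior K).Nonempty)
    (hLc : IsCompact L) (hLconv : Convex ℝ L) (hLint : (interior L).Nonempty)
    (hK0 : (0 : EuclideanSpace ℝ (Fin 3)) ∈ interior K)
    (hL0 : (0 : EuclideanSpace ℝ (Fin 3)) ∈ interior L)
    (W₀ W₁ W₂ W₃ : ℝ)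
    (hW : ∀ t : ℝ, 0 ≤ t →
      (volume (K + t • L)).toReal = W₀ + 3 * W₁ * t + 3 * W₂ * t ^ 2 + W₃ * t ^ 3)
    (μ : Measure (sphere (0 : EuclideanSpace ℝ (Fin 3)) 1)) (hμfin : IsFiniteMeasure μ)
    (hμ : ∀ M : Set (EuclideanSpace ℝ (Fin 3)),
      IsCompact M → Convex ℝ M → (interior M).Nonempty →
        Filter.Tendsto
          (fun t : ℝ => ((volume (K + t • M)).toReal - (volume K).toReal) / t)
          (nhdsWithin 0 (Set.Ioi 0))
          (nhds (∫ u : sphere (0 : EuclideanSpace ℝ (Fin 3)) 1, supp M u ∂μ)))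
    (hR2 : ∀ r ∈ Set.Icc (rIn K L) (rOut K L), 2 * W₂ * r - W₁ - W₃ * r ^ 2 ≥ 0) :
    (∫ u : sphere (0 : EuclideanSpace ℝ (Fin 3)) 1, (supp K u) ^ 2 / supp L u ∂μ)
      ≤ (6 * (volume K).toReal * W₂ - 3 * W₁ ^ 2) / (volume L).toReal := by
  -- basic data
  have hKne : K.Nonempty := ⟨0, interior_subset hK0⟩
  have hLne : L.Nonempty := ⟨0, interior_subset hL0⟩
  have hK0' : (0 : EuclideanSpace ℝ (Fin 3)) ∈ K := interior_subset hK0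
  have hL0' : (0 : EuclideanSpace ℝ (Fin 3)) ∈ L := interior_subset hL0
  obtain ⟨aK, haK, hballK⟩ : ∃ a > 0, closedBall (0 : EuclideanSpace ℝ (Fin 3)) a ⊆ K := by
    have := mem_interior_iff_mem_nhds.1 hK0
    exact (Metric.nhds_basis_closedBall.mem_iff).1 this
  obtain ⟨aL, haL, hballL⟩ : ∃ a > 0, closedBall (0 : EuclideanSpace ℝ (Fin 3)) a ⊆ L := by
    have := mem_interior_iff_mem_nhds.1 hL0
    exact (Metric.nhds_basis_closedBall.mem_iff).1 this
  obtain ⟨RK, hRK, hsubK⟩ := hKc.isBounded.subset_closedBall_lt 0 0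
  obtain ⟨RL, hRL, hsubL⟩ := hLc.isBounded.subset_closedBall_lt 0 0
  set VK : ℝ := (volume K).toReal with hVKdef
  set VL : ℝ := (volume L).toReal with hVLdef
  have hLfin : volume L ≠ ⊤ := hLc.measure_lt_top.ne
  have hKfin : volume K ≠ ⊤ := hKc.measure_lt_top.ne
  have hVLpos : 0 < VL :=
    ENNReal.toReal_pos (Measure.measure_pos_of_nonempty_interior _ hLint).ne' hLfin
  -- Step A : ∫ supp K dμ = 3 V(K)
  have intK : (∫ u : sphere (0 : EuclideanSpace ℝ (Fin 3)) 1, supp K u ∂μ) = 3 * VK := by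
    have h1 := hμ K hKc hKconv hKint
    have heq : ∀ᶠ t in nhdsWithin (0:ℝ) (Set.Ioi 0),
        ((volume (K + t • K)).toReal - (volume K).toReal) / t = (3 + 3*t + t^2) * VK := by
      filter_upwards [self_mem_nhdsWithin] with t ht
      have ht : (0:ℝ) < t := ht
      have hsm : K + t • K = (1 + t) • K := by
        rw [hKconv.add_smul zero_le_one ht.le, one_smul]
      rw [hsm, vol_smul _ (by positivity), ← hVKdef]
      field_simp
      ring
    have h2 : Filter.Tendsto (fun t : ℝ => (3 + 3*t + t^2) * VK)
        (nhdsWithin (0:ℝ) (Set.Ioi 0)) (nhds (3 * VK)) := by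
      have hc : Continuous fun t : ℝ => (3 + 3*t + t^2) * VK := by continuity
      have := (hc.tendsto 0).mono_left
        (nhdsWithin_le_nhds : nhdsWithin (0:ℝ) (Set.Ioi 0) ≤ nhds 0)
      simpa using this
    exact tendsto_nhds_unique (h1.congr' heq) h2
  -- W₀ = V(K)
  have hW0 : W₀ = VK := by
    have := hW 0 le_rfl
    rw [Set.zero_smul_set hLne, add_zero] at this
    simpa [hVKdef] using this.symm
  -- Step B : ∫ supp L dμ = 3 W₁
  have intL : (∫ u : sphere (0 : EuclideanSpace ℝ (Fin 3)) 1, supp L u ∂μ) = 3 * W₁ := by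
    have h1 := hμ L hLc hLconv hLint
    have heq : ∀ᶠ t in nhdsWithin (0:ℝ) (Set.Ioi 0),
        ((volume (K + t • L)).toReal - (volume K).toReal) / t
          = 3*W₁ + 3*W₂*t + W₃*t^2 := by
      filter_upwards [self_mem_nhdsWithin] with t ht
      have ht : (0:ℝ) < t := ht
      rw [hW t ht.le, ← hVKdef, hW0]
      field_simp
      ring
    have h2 : Filter.Tendsto (fun t : ℝ => 3*W₁ + 3*W₂*t + W₃*t^2)
        (nhdsWithin (0:ℝ) (Set.Ioi 0)) (nhds (3 * W₁)) := by
      have hc : Continuous fun t : ℝ => 3*W₁ + 3*W₂*t + W₃*t^2 := by continuity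
      have := (hc.tendsto 0).mono_left
        (nhdsWithin_le_nhds : nhdsWithin (0:ℝ) (Set.Ioi 0) ≤ nhds 0)
      simpa using this
    exact tendsto_nhds_unique (h1.congr' heq) h2
  -- Step C : W₃ = V(L)
  have htends : Filter.Tendsto
      (fun t : ℝ => (W₀ + 3*W₁*t + 3*W₂*t^2 + W₃*t^3) / t^3) Filter.atTop (nhds W₃) := by
    have hc : Continuous fun s : ℝ => W₀*s^3 + 3*W₁*s^2 + 3*W₂*s + W₃ := by continuity
    have h0 : Filter.Tendsto
        (fun t : ℝ => W₀*(t⁻¹)^3 + 3*W₁*(t⁻¹)^2 + 3*W₂*t⁻¹ + W₃) Filter.atTop (nhds W₃) := by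
      have h := (hc.tendsto 0).comp tendsto_inv_atTop_zero
      simp only [Function.comp_def] at h
      simpa using h
    refine h0.congr' ?_
    filter_upwards [Filter.eventually_ge_atTop (1:ℝ)] with t ht
    have ht0 : t ≠ 0 := by linarith
    field_simp
  have hC_low : VL ≤ W₃ := by
    refine ge_of_tendsto htends ?_
    filter_upwards [Filter.eventually_ge_atTop (1:ℝ)] with t ht
    have ht0 : (0:ℝ) < t := by linarith
    have hsub : t • L ⊆ K + t • L := by
      intro x hx
      simpa using Set.add_mem_add hK0' hx
    have hle : (volume (t • L)).toReal ≤ (volume (K + t • L)).toReal :=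
      ENNReal.toReal_mono (hKc.add (hLc.smul t)).measure_lt_top.ne (measure_mono hsub)
    rw [vol_smul _ ht0.le, ← hVLdef, hW t ht0.le] at hle
    rw [le_div_iff₀ (by positivity)]
    linarith
  have hC_upp : W₃ ≤ VL := by
    have key : ∀ ε : ℝ, 0 < ε →
        W₃ ≤ (volume (closedBall (0 : EuclideanSpace ℝ (Fin 3)) ε + L)).toReal := by
      intro ε hε
      refine le_of_tendsto htends ?_
      filter_upwards [Filter.eventually_ge_atTop (max 1 (RK / ε))] with t ht
      have ht1 : (1:ℝ) ≤ t := le_trans (le_max_left _ _) ht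
      have ht0 : (0:ℝ) < t := by linarith
      have hRKle : RK ≤ t * ε := by
        have := le_trans (le_max_right 1 (RK / ε)) ht
        calc RK = (RK / ε) * ε := by field_simp
          _ ≤ t * ε := by nlinarith
      have hsub : K + t • L ⊆ t • (closedBall (0 : EuclideanSpace ℝ (Fin 3)) ε + L) := by
        rw [smul_add t (closedBall (0 : EuclideanSpace ℝ (Fin 3)) ε) L,
          smul_cball t ε ht0 hε.le]
        exact Set.add_subset_add_right (hsubK.trans (closedBall_subset_closedBall hRKle))
      have hle : (volume (K + t • L)).toReal
          ≤ (volume (t • (closedBall (0 : EuclideanSpace ℝ (Fin 3)) ε + L))).toReal :=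
        ENNReal.toReal_mono
          (((isCompact_closedBall _ _).add hLc).smul t).measure_lt_top.ne
          (measure_mono hsub)
      rw [hW t ht0.le, vol_smul _ ht0.le] at hle
      rw [div_le_iff₀ (by positivity)]
      linarith
    refine le_of_forall_pos_le_add (fun δ hδ => ?_)
    have hts : Filter.Tendsto
        (fun r : ℝ => (volume (cthickening r L)).toReal) (nhds 0) (nhds VL) :=
      (ENNReal.tendsto_toReal hLfin).comp (tendsto_measure_cthickening_of_isCompact hLc)
    have hev : ∀ᶠ r in nhdsWithin (0:ℝ) (Set.Ioi 0),
        (volume (cthickening r L)).toReal < VL + δ :=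
      ((hts.mono_left nhdsWithin_le_nhds).eventually (eventually_lt_nhds (by linarith)))
    obtain ⟨ε, hε1, hε2⟩ := (hev.and self_mem_nhdsWithin).exists
    have hεpos : (0:ℝ) < ε := hε2
    have hsub2 : closedBall (0 : EuclideanSpace ℝ (Fin 3)) ε + L ⊆ cthickening ε L := by
      rintro x ⟨b, hb, l, hl, rfl⟩
      refine mem_cthickening_of_dist_le _ l ε L hl ?_
      simpa [dist_eq_norm] using mem_closedBall_zero_iff.1 hb
    have : (volume (closedBall (0 : EuclideanSpace ℝ (Fin 3)) ε + L)).toReal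
        ≤ (volume (cthickening ε L)).toReal :=
      ENNReal.toReal_mono (hLc.isBounded.cthickening.measure_lt_top).ne (measure_mono hsub2)
    calc W₃ ≤ _ := key ε hεpos
      _ ≤ (volume (cthickening ε L)).toReal := this
      _ ≤ VL + δ := hε1.le
  have hW3 : W₃ = VL := le_antisymm hC_upp hC_low
  -- Pointwise bound
  have hbddB : BddBelow ((fun u => supp K u / supp L u) ''
      sphere (0 : EuclideanSpace ℝ (Fin 3)) 1) := by
    refine ⟨0, ?_⟩
    rintro y ⟨v, hv, rfl⟩
    exact div_nonneg (supp_nonneg hKc hK0' v) (supp_nonneg hLc hL0' v)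
  have hbddA : BddAbove ((fun u => supp K u / supp L u) ''
      sphere (0 : EuclideanSpace ℝ (Fin 3)) 1) := by
    refine ⟨RK / aL, ?_⟩
    rintro y ⟨v, hv, rfl⟩
    have hv1 : ‖v‖ = 1 := mem_sphere_zero_iff_norm.1 hv
    have h1 : supp K v ≤ RK := by
      have := supp_le_of_subset_ball hKne hsubK (u := v)
      rwa [hv1, mul_one] at this
    have h2 : aL ≤ supp L v := supp_ge_of_ball hLc haL hballL hv1
    exact div_le_div₀ hRK.le h1 haL h2
  have hpt : ∀ u : sphere (0 : EuclideanSpace ℝ (Fin 3)) 1,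
      (supp K u) ^ 2 / supp L u ≤ (2*W₂*supp K u - W₁*supp L u) / VL := by
    intro u
    have hu1 : ‖(u : EuclideanSpace ℝ (Fin 3))‖ = 1 := mem_sphere_zero_iff_norm.1 u.2
    set a : ℝ := supp K u with ha
    set b : ℝ := supp L u with hb
    have hbpos : 0 < b := lt_of_lt_of_le haL (supp_ge_of_ball hLc haL hballL hu1)
    have hmem : a / b ∈ (fun v => supp K v / supp L v) ''
        sphere (0 : EuclideanSpace ℝ (Fin 3)) 1 := ⟨u, u.2, rfl⟩
    have hB := hR2 (a / b) ⟨csInf_le hbddB hmem, le_csSup hbddA hmem⟩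
    rw [hW3] at hB
    have key : 0 ≤ (2*W₂*(a/b) - W₁ - VL*(a/b)^2) * b^2 := mul_nonneg hB (sq_nonneg b)
    have hexp : (2*W₂*(a/b) - W₁ - VL*(a/b)^2) * b^2
        = (2*W₂*a - W₁*b)*b - a^2*VL := by
      field_simp
    rw [div_le_div_iff₀ hbpos hVLpos]
    linarith [hexp ▸ key]
  -- Integrability
  have contK : Continuous fun u : sphere (0 : EuclideanSpace ℝ (Fin 3)) 1 => supp K u :=
    (supp_continuous hKc hKne).comp continuous_subtype_val
  have contL : Continuous fun u : sphere (0 : EuclideanSpace ℝ (Fin 3)) 1 => supp L u :=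
    (supp_continuous hLc hLne).comp continuous_subtype_val
  have hLne0 : ∀ u : sphere (0 : EuclideanSpace ℝ (Fin 3)) 1, supp L u ≠ 0 := fun u =>
    (lt_of_lt_of_le haL (supp_ge_of_ball hLc haL hballL
      (mem_sphere_zero_iff_norm.1 u.2))).ne'
  have intf : Integrable
      (fun u : sphere (0 : EuclideanSpace ℝ (Fin 3)) 1 => (supp K u) ^ 2 / supp L u) μ :=
    integrable_of_cont μ _ ((contK.pow 2).div contL hLne0)
  have intg : Integrable
      (fun u : sphere (0 : EuclideanSpace ℝ (Fin 3)) 1 =>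
        (2*W₂*supp K u - W₁*supp L u) / VL) μ :=
    integrable_of_cont μ _ (((continuous_const.mul contK).sub (continuous_const.mul contL)).div_const _)
  have intgK : Integrable (fun u : sphere (0 : EuclideanSpace ℝ (Fin 3)) 1 => supp K u) μ :=
    integrable_of_cont μ _ contK
  have intgL : Integrable (fun u : sphere (0 : EuclideanSpace ℝ (Fin 3)) 1 => supp L u) μ :=
    integrable_of_cont μ _ contL
  -- Final computation
  calc (∫ u : sphere (0 : EuclideanSpace ℝ (Fin 3)) 1, (supp K u) ^ 2 / supp L u ∂μ)
      ≤ ∫ u : sphere (0 : EuclideanSpace ℝ (Fin 3)) 1,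
          (2*W₂*supp K u - W₁*supp L u) / VL ∂μ := integral_mono intf intg hpt
    _ = (∫ u : sphere (0 : EuclideanSpace ℝ (Fin 3)) 1,
          (2*W₂*supp K u - W₁*supp L u) ∂μ) / VL := integral_div VL _
    _ = (2*W₂*(3*VK) - W₁*(3*W₁)) / VL := by
        rw [integral_sub (intgK.const_mul _) (intgL.const_mul _),
          integral_const_mul, integral_const_mul, intK, intL]
    _ = (6 * VK * W₂ - 3 * W₁ ^ 2) / VL := by ring_nf
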